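/- Let n ≥ 1 and h ≥ 0 be integers, and define the one-step relation on Fin n by: j is reachable from i in one step iff |i − j|_n ≤ h. Then for every ℓ ≥ 0 and every i ∈ Fin n, the set of indices reachable from i in at most ℓ steps is exactly {j ∈ Fin n : |i − j|_n ≤ ℓ·h}, and its cardinality equals min(n, 2·ℓ·h + 1). -/

import Mathlib

/-- Circular distance on `Fin n`: `|i − j|_n = min(|i − j|, n − |i − j|)`. -/
def circDist (n : ℕ) (i j : Fin n) : ℕ :=
  min (max i.val j.val - min i.val j.val) (n - (max i.val j.val - min i.val j.val))

/-- `j` is reachable from `i` in at most `ℓ` steps, where a single step may move by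
circular distance at most `h`: there is a chain `i = f 0, f 1, …, f m = j` with `m ≤ ℓ`
and `|f s − f (s+1)|_n ≤ h` for all `s < m`. -/
def ReachableWithin (n h ℓ : ℕ) (i j : Fin n) : Prop :=
  ∃ (m : ℕ) (f : ℕ → Fin n), m ≤ ℓ ∧ f 0 = i ∧ f m = j ∧
    ∀ s < m, circDist n (f s) (f (s + 1)) ≤ h

section Aux

set_option linter.unusedSectionVars false

open Fin.NatCast

variable {n : ℕ} [NeZero n]

lemma circDist_sub_val (i j : Fin n) :
    (j - i).val = if i.val ≤ j.val then j.val - i.val else n - (i.val - j.val) := by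
  have key : (j - i).val = (n - i.val + j.val) % n := by
    rw [Fin.sub_def]
  have hi := i.isLt; have hj := j.isLt
  rw [key]
  split_ifs with hij
  · have h1 : n - i.val + j.val = (j.val - i.val) + n := by omega
    rw [h1, Nat.add_mod_right, Nat.mod_eq_of_lt (by omega)]
  · rw [Nat.mod_eq_of_lt (by omega)]
    omega

lemma circDist_eq (i j : Fin n) :
    circDist n i j = min (j - i).val (n - (j - i).val) := by
  rw [circDist, circDist_sub_val]
  have hi := i.isLt; have hj := j.isLt
  split_ifs with hij <;> omega

lemma circDist_comm' {N : ℕ} (i j : Fin N) : circDist N i j = circDist N j i := by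
  unfold circDist
  rw [max_comm i.val j.val, min_comm i.val j.val]

lemma circDist_self' {N : ℕ} (i : Fin N) : circDist N i i = 0 := by
  simp [circDist]

lemma circDist_triangle (i j k : Fin n) :
    circDist n i k ≤ circDist n i j + circDist n j k := by
  rw [circDist_eq, circDist_eq, circDist_eq]
  have h1 : k - i = (j - i) + (k - j) := by abel
  have key : (k - i).val = ((j - i).val + (k - j).val) % n := by
    rw [h1, Fin.add_def]
  rw [key]
  have ha := (j - i).isLt; have hb := (k - j).isLt
  rcases lt_or_ge ((j - i).val + (k - j).val) n with hlt | hge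
  · rw [Nat.mod_eq_of_lt hlt]; omega
  · rw [Nat.mod_eq_sub_mod hge, Nat.mod_eq_of_lt (by omega)]; omega

lemma reach_le {h ℓ : ℕ} {i j : Fin n} (hr : ReachableWithin n h ℓ i j) :
    circDist n i j ≤ ℓ * h := by
  obtain ⟨m, f, hm, h0, hmj, hstep⟩ := hr
  have key : ∀ t, t ≤ m → circDist n i (f t) ≤ t * h := by
    intro t
    induction t with
    | zero => intro _; rw [h0, circDist_self']; omega
    | succ t ih =>
      intro ht
      calc circDist n i (f (t + 1)) ≤ circDist n i (f t) + circDist n (f t) (f (t + 1)) :=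
            circDist_triangle _ _ _
        _ ≤ t * h + h := add_le_add (ih (by omega)) (hstep t (by omega))
        _ = (t + 1) * h := by ring
  calc circDist n i j = circDist n i (f m) := by rw [hmj]
    _ ≤ m * h := key m le_rfl
    _ ≤ ℓ * h := Nat.mul_le_mul_right _ hm

lemma reach_symm {h ℓ : ℕ} {i j : Fin n} (hr : ReachableWithin n h ℓ i j) :
    ReachableWithin n h ℓ j i := by
  obtain ⟨m, f, hm, h0, hmj, hstep⟩ := hr
  refine ⟨m, fun s => f (m - s), hm, by simpa, by simpa, ?_⟩
  intro s hs
  show circDist n (f (m - s)) (f (m - (s + 1))) ≤ h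
  have h1 : m - s = (m - (s + 1)) + 1 := by omega
  rw [h1, circDist_comm']
  exact hstep _ (by omega)

lemma reach_of_val_le {h ℓ : ℕ} {i j : Fin n} (hd : (j - i).val ≤ ℓ * h) :
    ReachableWithin n h ℓ i j := by
  set D := (j - i).val with hD
  have hDn : D < n := (j - i).isLt
  refine ⟨ℓ, fun s => i + ((min (s * h) D : ℕ) : Fin n), le_rfl, by simp, ?_, ?_⟩
  · show i + ((min (ℓ * h) D : ℕ) : Fin n) = j
    have h1 : min (ℓ * h) D = D := by omega
    rw [h1, hD, Fin.cast_val_eq_self]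
    abel
  · intro s hs
    show circDist n (i + ((min (s * h) D : ℕ) : Fin n)) (i + ((min ((s + 1) * h) D : ℕ) : Fin n)) ≤ h
    set a := min (s * h) D with ha
    set b := min ((s + 1) * h) D with hb
    have hsh : s * h + h = (s + 1) * h := by ring
    have hab : a ≤ b := by omega
    have hba : b ≤ a + h := by omega
    have hbn : b < n := by omega
    have han : a < n := by omega
    rw [circDist_eq]
    have h2 : (i + (b : Fin n)) - (i + (a : Fin n)) = (b : Fin n) - (a : Fin n) := by abel
    rw [h2]
    have hval : ((b : Fin n) - (a : Fin n)).val = b - a := by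
      rw [circDist_sub_val, Fin.val_cast_of_lt han, Fin.val_cast_of_lt hbn, if_pos hab]
    rw [hval]
    omega

lemma reach_of_circDist_le {h ℓ : ℕ} {i j : Fin n} (hd : circDist n i j ≤ ℓ * h) :
    ReachableWithin n h ℓ i j := by
  rw [circDist_eq] at hd
  rcases le_or_gt (j - i).val (ℓ * h) with h1 | h1
  · exact reach_of_val_le h1
  · have hDn : (j - i).val < n := (j - i).isLt
    have hi := i.isLt; have hj := j.isLt
    have e1 := circDist_sub_val i j
    have e2 := circDist_sub_val j i
    have h2 : (i - j).val ≤ ℓ * h := by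
      rcases le_or_gt i.val j.val with hc | hc
      · rw [if_pos hc] at e1
        rw [if_neg (by omega)] at e2
        omega
      · rw [if_neg (by omega)] at e1
        rw [if_pos (by omega)] at e2
        omega
    exact reach_symm (reach_of_val_le h2)

lemma card_ball (r : ℕ) (i : Fin n) :
    (Finset.univ.filter (fun j : Fin n => circDist n i j ≤ r)).card = min n (2 * r + 1) := by
  have hstep : (Finset.univ.filter (fun j : Fin n => circDist n i j ≤ r)).card
      = ((Finset.range n).filter (fun v => min v (n - v) ≤ r)).card := by
    refine Finset.card_bij' (fun j _ => (j - i).val) (fun v _ => i + (v : Fin n)) ?_ ?_ ?_ ?_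
    · intro j hj
      simp only [Finset.mem_filter, Finset.mem_univ, true_and] at hj ⊢
      rw [Finset.mem_range]
      rw [circDist_eq] at hj
      exact ⟨(j - i).isLt, hj⟩
    · intro v hv
      simp only [Finset.mem_filter, Finset.mem_range] at hv
      simp only [Finset.mem_filter, Finset.mem_univ, true_and]
      rw [circDist_eq]
      have h3 : (i + (v : Fin n)) - i = (v : Fin n) := by abel
      rw [h3, Fin.val_cast_of_lt hv.1]
      exact hv.2
    · intro j hj
      show i + (((j - i).val : ℕ) : Fin n) = j
      rw [Fin.cast_val_eq_self]
      abel
    · intro v hv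
      simp only [Finset.mem_filter, Finset.mem_range] at hv
      show ((i + (v : Fin n)) - i).val = v
      have h3 : (i + (v : Fin n)) - i = (v : Fin n) := by abel
      rw [h3, Fin.val_cast_of_lt hv.1]
  rw [hstep]
  rcases le_or_gt n (2 * r + 1) with hc | hc
  · rw [Finset.filter_true_of_mem, Finset.card_range]
    · omega
    · intro v hv
      rw [Finset.mem_range] at hv
      omega
  · have heq : (Finset.range n).filter (fun v => min v (n - v) ≤ r)
        = Finset.range (r + 1) ∪ Finset.Ico (n - r) n := by
      ext v
      simp only [Finset.mem_filter, Finset.mem_range, Finset.mem_union, Finset.mem_Ico]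
      omega
    rw [heq, Finset.card_union_of_disjoint, Finset.card_range, Nat.card_Ico]
    · omega
    · rw [Finset.disjoint_left]
      intro v hv hv'
      rw [Finset.mem_range] at hv
      rw [Finset.mem_Ico] at hv'
      omega

end Aux

/-- Linear receptive-field growth of sliding-window attention: the set of indices
reachable from `i` in at most `ℓ` steps of circular radius `h` is exactly
`{j : |i − j|_n ≤ ℓ·h}`, and its cardinality equals `min n (2·ℓ·h + 1)`. -/
theorem swa_receptive_field (n h : ℕ) (hn : 1 ≤ n) (ℓ : ℕ) (i : Fin n) :
    {j : Fin n | ReachableWithin n h ℓ i j} = {j : Fin n | circDist n i j ≤ ℓ * h}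
    ∧ {j : Fin n | ReachableWithin n h ℓ i j}.ncard = min n (2 * ℓ * h + 1) := by
  haveI : NeZero n := ⟨by omega⟩
  have hset : {j : Fin n | ReachableWithin n h ℓ i j} = {j : Fin n | circDist n i j ≤ ℓ * h} := by
    ext j
    exact ⟨reach_le, reach_of_circDist_le⟩
  refine ⟨hset, ?_⟩
  rw [hset]
  have hco : {j : Fin n | circDist n i j ≤ ℓ * h}
      = ↑(Finset.univ.filter (fun j : Fin n => circDist n i j ≤ ℓ * h)) := by
    ext j; simp
  rw [hco, Set.ncard_coe_finset, card_ball, mul_assoc]
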